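/- arXiv:2310.17823 — 7 statements merged into one kernel-verified Lean document; each statement's English description precedes it below -/
import Mathlib

section
/- Let (A_n)_{n≥1} be complex numbers and ν a positive integer such that Σ_{n≥1} |A_n| n^ν < ∞. For x > 0 set f(x) = Σ_{n≥1} (Σ_{d ∣ n} A_d μ(n/d)) / (e^{n x} − 1). Then f is ν-times differentiable on (0, ∞) and for every x > 0, f^{(ν)}(x) = Σ_{n≥1} (Σ_{d ∣ n} A_d (−d)^ν μ(n/d)) / (e^{n x} − 1). -/
/-!
Writing `1 / (e^{nx} - 1) = ∑_{k ≥ 1} e^{-nkx}` and regrouping the double series by `m = nk`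
turns a Lambert series `∑ cₙ / (e^{nx} - 1)` into `∑ₘ (∑_{n ∣ m} cₙ) e^{-mx}`. For
`c = μ * h` Möbius inversion collapses the inner sum to `h m`, so the series of the statement
with weights `A_d (-d)^j` is the exponential series `∑ₘ A_m (-m)^j e^{-mx}`: the `j`-th
termwise derivative of the case `j = 0`. For `j ≤ ν` these termwise derivatives are dominated
by `|A_m| m^ν` uniformly in `x ≥ 0`, so differentiating termwise is legitimate up to order `ν`.
-/

open ArithmeticFunction

theorem contDiffOn_and_iteratedDerivWithin_eq_of_hasDerivAt
    {𝕜 F : Type*} [NontriviallyNormedField 𝕜] [NormedAddCommGroup F] [NormedSpace 𝕜 F]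
    {s : Set 𝕜} (hs : IsOpen s) (ν : ℕ) (g : ℕ → 𝕜 → F)
    (hderiv : ∀ j < ν, ∀ x ∈ s, HasDerivAt (g j) (g (j + 1) x) x)
    (hcont : ContinuousOn (g ν) s) :
    ContDiffOn 𝕜 ν (g 0) s ∧ ∀ x ∈ s, iteratedDerivWithin ν (g 0) s x = g ν x := by
  induction ν generalizing g with
  | zero => exact ⟨contDiffOn_zero.mpr hcont, fun x _ => by simp⟩
  | succ ν ih =>
    obtain ⟨hcd, hiter⟩ := ih (fun j => g (j + 1)) (fun j hj => hderiv (j + 1) (by omega)) hcont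
    have hderiv_eq : Set.EqOn (derivWithin (g 0) s) (g 1) s := fun x hx => by
      rw [derivWithin_of_isOpen hs hx, (hderiv 0 ν.succ_pos x hx).deriv]
    refine ⟨?_, fun x hx => ?_⟩
    · rw [Nat.cast_succ, contDiffOn_succ_iff_derivWithin hs.uniqueDiffOn]
      exact ⟨fun x hx => (hderiv 0 ν.succ_pos x hx).differentiableAt.differentiableWithinAt,
        by simp, hcd.congr hderiv_eq⟩
    · rw [iteratedDerivWithin_succ', iteratedDerivWithin_congr hderiv_eq hx, hiter x hx]

/-- The `j`-th termwise derivative of `x ↦ ∑ aᵢ e^{-rᵢ x}`. -/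
noncomputable def expSum {ι : Type*} (a : ι → ℂ) (r : ι → ℝ) (j : ℕ) (x : ℝ) : ℂ :=
  ∑' i, a i * (-(r i : ℂ)) ^ j * Complex.exp (-(r i : ℂ) * x)

namespace expSum

variable {ι : Type*} {a : ι → ℂ} {r : ι → ℝ} {ν j : ℕ}

lemma hasDerivAt_term (a : ℂ) (r : ℝ) (j : ℕ) (x : ℝ) :
    HasDerivAt (fun y : ℝ => a * (-(r : ℂ)) ^ j * Complex.exp (-(r : ℂ) * y))
      (a * (-(r : ℂ)) ^ (j + 1) * Complex.exp (-(r : ℂ) * x)) x := by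
  have hexp := (((hasDerivAt_id (x : ℂ)).const_mul (-(r : ℂ))).cexp).comp_ofReal
  exact (hexp.const_mul (a * (-(r : ℂ)) ^ j)).congr_deriv (by simp only [id]; ring)

lemma norm_term_le {a : ℂ} {r : ℝ} (hr : 1 ≤ r) (hj : j ≤ ν) {x : ℝ} (hx : 0 ≤ x) :
    ‖a * (-(r : ℂ)) ^ j * Complex.exp (-(r : ℂ) * x)‖ ≤ ‖a‖ * r ^ ν := by
  have hexp : ‖Complex.exp (-(r : ℂ) * x)‖ ≤ 1 := by
    rw [Complex.norm_exp, Real.exp_le_one_iff]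
    simp only [neg_mul, Complex.neg_re, Complex.mul_re, Complex.ofReal_re, Complex.ofReal_im,
      mul_zero, sub_zero, Left.neg_nonpos_iff]
    positivity
  rw [norm_mul, norm_mul, norm_pow, norm_neg, Complex.norm_real, Real.norm_of_nonneg (by linarith)]
  calc ‖a‖ * r ^ j * ‖Complex.exp (-(r : ℂ) * x)‖ ≤ ‖a‖ * r ^ ν * 1 := by
        gcongr
    _ = ‖a‖ * r ^ ν := mul_one _

variable (hr : ∀ i, 1 ≤ r i) (ha : Summable fun i => ‖a i‖ * r i ^ ν)
include hr ha

lemma hasDerivAt (hj : j < ν) {x : ℝ} (hx : 0 < x) :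
    HasDerivAt (expSum a r j) (expSum a r (j + 1) x) x :=
  hasDerivAt_tsum_of_isPreconnected ha isOpen_Ioi isPreconnected_Ioi
    (fun i y _ => hasDerivAt_term (a i) (r i) j y)
    (fun i _ hy => norm_term_le (hr i) hj hy.le) hx
    (.of_norm_bounded ha fun i => norm_term_le (hr i) hj.le hx.le) hx

lemma continuousOn (hj : j ≤ ν) : ContinuousOn (expSum a r j) (Set.Ici 0) :=
  continuousOn_tsum (fun i => by fun_prop) ha fun i x hx => norm_term_le (hr i) hj hx

theorem contDiffOn_and_iteratedDerivWithin :
    ContDiffOn ℝ ν (expSum a r 0) (Set.Ioi 0) ∧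
      ∀ x ∈ Set.Ioi (0 : ℝ), iteratedDerivWithin ν (expSum a r 0) (Set.Ioi 0) x = expSum a r ν x :=
  contDiffOn_and_iteratedDerivWithin_eq_of_hasDerivAt isOpen_Ioi ν (expSum a r)
    (fun _ hj _ hx => hasDerivAt hr ha hj hx)
    ((continuousOn hr ha le_rfl).mono Set.Ioi_subset_Ici_self)

end expSum

section Lambert

variable {𝕜 : Type*} [NontriviallyNormedField 𝕜] [CompleteSpace 𝕜] {c : ℕ → 𝕜} {q : 𝕜}

lemma summable_lambert_prod (hq : ‖q‖ < 1)
    (hc : Summable fun n : ℕ+ => ‖c n‖ * ‖q‖ ^ (n : ℕ)) :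
    Summable fun p : ℕ+ × ℕ+ => c p.1 * q ^ (p.1 * p.2 : ℕ) := by
  have hgeom : Summable fun b : ℕ+ => ‖q‖ ^ b.natPred :=
    (summable_geometric_of_lt_one (norm_nonneg q) hq).comp_injective PNat.natPred_injective
  refine .of_norm_bounded (hc.mul_of_nonneg hgeom (fun _ => by positivity) fun _ => by positivity)
    fun ⟨a, b⟩ => ?_
  have hexp : (a : ℕ) + b.natPred ≤ a * b := by
    have := PNat.natPred_add_one b
    nlinarith [a.pos]
  rw [norm_mul, norm_pow, mul_assoc, ← pow_add]
  exact mul_le_mul_of_nonneg_left (pow_le_pow_of_le_one (norm_nonneg q) hq.le hexp) (norm_nonneg _)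

theorem tsum_lambert_eq_tsum_sum_divisors (hq : ‖q‖ < 1)
    (hc : Summable fun n : ℕ+ => ‖c n‖ * ‖q‖ ^ (n : ℕ)) :
    ∑' n : ℕ+, c n * q ^ (n : ℕ) / (1 - q ^ (n : ℕ)) =
      ∑' n : ℕ+, (∑ d ∈ (n : ℕ).divisors, c d) * q ^ (n : ℕ) := by
  have hF := summable_lambert_prod hq hc
  have hrow (a : ℕ+) :
      ∑' b : ℕ+, c a * q ^ (a * b : ℕ) = c a * q ^ (a : ℕ) / (1 - q ^ (a : ℕ)) := by
    have hqa : ‖q ^ (a : ℕ)‖ < 1 := by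
      rw [norm_pow]; exact pow_lt_one₀ (norm_nonneg q) hq a.ne_zero
    rw [tsum_pnat_eq_tsum_succ (f := fun b => c a * q ^ (a * b : ℕ)), div_eq_mul_inv,
      ← tsum_geometric_of_norm_lt_one hqa, ← tsum_mul_left]
    exact tsum_congr fun b => by ring
  have hcol (n : ℕ+) : ∑' x : (n : ℕ).divisorsAntidiagonal, c x.1.1 * q ^ (x.1.1 * x.1.2) =
      (∑ d ∈ (n : ℕ).divisors, c d) * q ^ (n : ℕ) := by
    rw [tsum_fintype, Finset.univ_eq_attach,
      Finset.sum_attach _ (fun x : ℕ × ℕ => c x.1 * q ^ (x.1 * x.2)), Finset.sum_mul,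
      ← Nat.sum_divisorsAntidiagonal (fun a _ => c a * q ^ (n : ℕ))]
    refine Finset.sum_congr rfl fun x hx => ?_
    rw [(Nat.mem_divisorsAntidiagonal.mp hx).1]
  calc ∑' n : ℕ+, c n * q ^ (n : ℕ) / (1 - q ^ (n : ℕ))
      = ∑' p : ℕ+ × ℕ+, c p.1 * q ^ (p.1 * p.2 : ℕ) := by
        rw [hF.tsum_prod]; exact tsum_congr fun a => (hrow a).symm
    _ = ∑' n : ℕ+, (∑ d ∈ (n : ℕ).divisors, c d) * q ^ (n : ℕ) := by
        rw [← sigmaAntidiagonalEquivProd.tsum_eq]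
        exact (sigmaAntidiagonalEquivProd.summable_iff.mpr hF).tsum_sigma.trans (tsum_congr hcol)

end Lambert

lemma sum_divisors_sum_divisors_mul_moebius {R : Type*} [CommRing R] (h : ℕ → R) {n : ℕ}
    (hn : 0 < n) :
    ∑ d ∈ n.divisors, ∑ e ∈ d.divisors, h e * ((moebius (d / e) : ℤ) : R) = h n := by
  refine (sum_eq_iff_sum_mul_moebius_eq.mpr (fun m _ => ?_)) n hn
  rw [Nat.sum_divisorsAntidiagonal' (f := fun a b => ((moebius a : ℤ) : R) * h b)]
  exact Finset.sum_congr rfl fun _ _ => mul_comm _ _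

theorem tsum_lambert_moebius {h : ℕ → ℂ} (hh : Summable fun n => ‖h n‖) {q : ℂ} (hq : ‖q‖ < 1) :
    ∑' n : ℕ+, (∑ d ∈ (n : ℕ).divisors, h d * ((moebius ((n : ℕ) / d) : ℤ) : ℂ)) * q ^ (n : ℕ) /
        (1 - q ^ (n : ℕ)) = ∑' n : ℕ+, h n * q ^ (n : ℕ) := by
  have hbound (n : ℕ) : ‖∑ d ∈ n.divisors, h d * ((moebius (n / d) : ℤ) : ℂ)‖ ≤ ∑' k, ‖h k‖ := by
    refine (norm_sum_le _ _).trans ((Finset.sum_le_sum fun d _ => ?_).trans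
      (hh.sum_le_tsum _ fun _ _ => norm_nonneg _))
    rw [norm_mul, Complex.norm_intCast]
    exact mul_le_of_le_one_right (norm_nonneg _) (by exact_mod_cast abs_moebius_le_one)
  have hc : Summable fun n : ℕ+ =>
      ‖∑ d ∈ (n : ℕ).divisors, h d * ((moebius ((n : ℕ) / d) : ℤ) : ℂ)‖ * ‖q‖ ^ (n : ℕ) :=
    .of_nonneg_of_le (fun _ => by positivity)
      (fun n => mul_le_mul_of_nonneg_right (hbound n) (by positivity))
      (((summable_geometric_of_lt_one (norm_nonneg q) hq).mul_left _).comp_injective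
        PNat.coe_injective)
  refine (tsum_lambert_eq_tsum_sum_divisors
    (c := fun k => ∑ d ∈ k.divisors, h d * ((moebius (k / d) : ℤ) : ℂ)) hq hc).trans
    (tsum_congr fun n => ?_)
  rw [sum_divisors_sum_divisors_mul_moebius h n.pos]

theorem tsum_moebius_div_exp_sub_one {h : ℕ → ℂ} (hh : Summable fun n => ‖h n‖) {z : ℂ}
    (hz : 0 < z.re) :
    ∑' n : ℕ+, (∑ d ∈ (n : ℕ).divisors, h d * ((moebius ((n : ℕ) / d) : ℤ) : ℂ)) /
        (Complex.exp (n * z) - 1) = ∑' n : ℕ+, h n * Complex.exp (-n * z) := by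
  set q := Complex.exp (-z)
  have hq : ‖q‖ < 1 := by
    rw [Complex.norm_exp, Complex.neg_re, Real.exp_lt_one_iff]; linarith
  have hpow (n : ℕ) : Complex.exp (-n * z) = q ^ n := by
    rw [← Complex.exp_nat_mul, neg_mul, mul_neg]
  calc _ = ∑' n : ℕ+, (∑ d ∈ (n : ℕ).divisors, h d * ((moebius ((n : ℕ) / d) : ℤ) : ℂ)) *
        q ^ (n : ℕ) / (1 - q ^ (n : ℕ)) := tsum_congr fun n => ?_
    _ = ∑' n : ℕ+, h n * q ^ (n : ℕ) := tsum_lambert_moebius hh hq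
    _ = _ := tsum_congr fun n => by rw [hpow]
  have hne : q ^ (n : ℕ) ≠ 0 := pow_ne_zero _ (Complex.exp_ne_zero _)
  rw [show Complex.exp (n * z) = (q ^ (n : ℕ))⁻¹ by rw [← hpow, neg_mul, Complex.exp_neg, inv_inv]]
  field_simp

theorem tsum_moebius_div_exp_sub_one_eq_expSum {A : ℕ → ℂ} {ν j : ℕ}
    (hA : Summable fun n : ℕ => ‖A (n + 1)‖ * ((n : ℝ) + 1) ^ ν) (hj : j ≤ ν) {x : ℝ}
    (hx : 0 < x) :
    ∑' n : ℕ, (∑ d ∈ Nat.divisors (n + 1),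
        A d * (-(d : ℂ)) ^ j * ((moebius ((n + 1) / d) : ℤ) : ℂ)) /
          (Complex.exp (((n : ℝ) + 1) * x) - 1) =
      expSum (fun n => A (n + 1)) (fun n => (n : ℝ) + 1) j x := by
  have hh : Summable fun n => ‖A n * (-(n : ℂ)) ^ j‖ := by
    refine (summable_nat_add_iff 1).mp (hA.of_nonneg_of_le (fun _ => norm_nonneg _) fun n => ?_)
    rw [norm_mul, norm_pow, norm_neg, Complex.norm_natCast, Nat.cast_succ]
    gcongr
    linarith
  have key := tsum_moebius_div_exp_sub_one hh (z := x) (by simpa using hx)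
  rw [tsum_pnat_eq_tsum_succ (f := fun n => (∑ d ∈ n.divisors,
      A d * (-(d : ℂ)) ^ j * ((moebius (n / d) : ℤ) : ℂ)) / (Complex.exp (n * x) - 1)),
    tsum_pnat_eq_tsum_succ (f := fun n => A n * (-(n : ℂ)) ^ j * Complex.exp (-n * x))] at key
  rw [expSum]
  push_cast at key ⊢
  exact key

theorem stmt1_general (A : ℕ → ℂ) (ν : ℕ)
    (hA : Summable fun n : ℕ => ‖A (n + 1)‖ * ((n : ℝ) + 1) ^ ν)
    (f : ℝ → ℂ)
    (hf : ∀ x : ℝ, f x =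
      ∑' n : ℕ,
        (∑ d ∈ Nat.divisors (n + 1),
            A d * ((ArithmeticFunction.moebius ((n + 1) / d) : ℤ) : ℂ)) /
          (Complex.exp (((n : ℝ) + 1) * x) - 1)) :
    ContDiffOn ℝ ν f (Set.Ioi (0 : ℝ)) ∧
    ∀ x : ℝ, 0 < x →
      iteratedDerivWithin ν f (Set.Ioi (0 : ℝ)) x =
        ∑' n : ℕ,
          (∑ d ∈ Nat.divisors (n + 1),
              A d * (-(d : ℂ)) ^ ν * ((ArithmeticFunction.moebius ((n + 1) / d) : ℤ) : ℂ)) /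
            (Complex.exp (((n : ℝ) + 1) * x) - 1) := by
  have hfg : Set.EqOn f (expSum (fun n => A (n + 1)) (fun n => (n : ℝ) + 1) 0) (Set.Ioi 0) :=
    fun x hx => by
      rw [hf x, ← tsum_moebius_div_exp_sub_one_eq_expSum hA ν.zero_le hx]
      simp only [pow_zero, mul_one]
  obtain ⟨hcontDiff, hiter⟩ :=
    expSum.contDiffOn_and_iteratedDerivWithin (fun n => by simp) hA
  refine ⟨hcontDiff.congr hfg, fun x hx => ?_⟩
  rw [iteratedDerivWithin_congr hfg hx, hiter x hx,
    tsum_moebius_div_exp_sub_one_eq_expSum hA le_rfl hx]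

/-- **Lemma 2 of the paper.**  If `Σ |Aₙ| nᵛ < ∞` and `f` is the Lambert-type series
`f(x) = Σₙ (Σ_{d ∣ n} A_d μ(n/d)) / (e^{n x} − 1)`, then `f` is `ν`-times differentiable
on `(0, ∞)` and its `ν`-th derivative there is
`Σₙ (Σ_{d ∣ n} A_d (−d)ᵛ μ(n/d)) / (e^{n x} − 1)`. -/
theorem stmt1 (A : ℕ → ℂ) (ν : ℕ) (hν : 0 < ν)
    (hA : Summable fun n : ℕ => ‖A (n + 1)‖ * ((n : ℝ) + 1) ^ ν)
    (f : ℝ → ℂ)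
    (hf : ∀ x : ℝ, f x =
      ∑' n : ℕ,
        (∑ d ∈ Nat.divisors (n + 1),
            A d * ((ArithmeticFunction.moebius ((n + 1) / d) : ℤ) : ℂ)) /
          (Complex.exp (((n : ℝ) + 1) * x) - 1)) :
    ContDiffOn ℝ ν f (Set.Ioi (0 : ℝ)) ∧
    ∀ x : ℝ, 0 < x →
      iteratedDerivWithin ν f (Set.Ioi (0 : ℝ)) x =
        ∑' n : ℕ,
          (∑ d ∈ Nat.divisors (n + 1),
              A d * (-(d : ℂ)) ^ ν * ((ArithmeticFunction.moebius ((n + 1) / d) : ℤ) : ℂ)) /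
            (Complex.exp (((n : ℝ) + 1) * x) - 1) :=
  stmt1_general A ν hA f hf
end

section
/- Let ℏ, c, m₀ > 0 be real, set E₀ = m₀c² and l₀ = ℏ/(m₀c), and let N be a positive integer with N·l₀ < 1. Let f₁, …, f_N be complex numbers and define Y : ℝ × ℝ → ℂ by Y(x,t) = exp(−iE₀t/ℏ) Σ_{n=1}^{N} f_n exp( i E₀ l₀² n² t / (2ℏ√(1 − l₀²n²)) ) e^{−n x}. Then for all real x and t, the series Σ_{m=0}^∞ (−1)^{m+1} C(−1/2, m) l₀^{2m+2} ∂_x^{2m+2} Y(x,t) converges absolutely, and iℏ ∂_t Y(x,t) = E₀ Y(x,t) + (E₀/2) Σ_{m=0}^∞ (−1)^{m+1} C(−1/2, m) l₀^{2m+2} ∂_x^{2m+2} Y(x,t). -/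
/-!
Each mode `e^{-nx}` is an eigenfunction of `∂ₓ^{2m+2}` with eigenvalue `n^{2m+2}`, so the series
acts on it as multiplication by `Σₘ (-1)^{m+1} C(-1/2, m) q^{m+1} = -q / √(1 - q)`, where
`q = l₀²n² < 1`: this is the binomial series of `(1 - q)^{-1/2}`, which converges absolutely.
The time exponent `γ` of the mode is chosen so that `iℏγ = E₀ + (E₀/2)(-q / √(1 - q))`, and
since `Y` is a finite sum of modes, both sides of the equation can be computed mode by mode.
-/

open scoped BigOperators

/-- The generalized binomial coefficient `C(−1/2, m) = (∏_{j=0}^{m−1} (−1/2 − j)) / m!`. -/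
noncomputable def genBinomHalf (m : ℕ) : ℝ :=
  (∏ j ∈ Finset.range m, (-(1 : ℝ) / 2 - (j : ℝ))) / (m.factorial : ℝ)

open Finset Complex

theorem genBinomHalf_eq_choose (m : ℕ) : genBinomHalf m = Ring.choose (-1 / 2 : ℝ) m := by
  rw [Ring.choose_eq_smul, smul_eq_mul, genBinomHalf, ← descPochhammer_eval_eq_prod_range,
    ← Polynomial.aeval_eq_smeval, Polynomial.aeval_def, Polynomial.eval₂_eq_eval_map,
    descPochhammer_map, inv_mul_eq_div]

theorem mem_eball_zero_one_of_norm_lt_one {E : Type*} [SeminormedAddCommGroup E] {x : E}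
    (hx : ‖x‖ < 1) : x ∈ Metric.eball (0 : E) 1 := by
  rwa [mem_eball_zero_iff, ← ofReal_norm, ENNReal.ofReal_lt_one]

namespace Real

theorem hasSum_choose_mul_pow {a x : ℝ} (hx : |x| < 1) :
    HasSum (fun n => Ring.choose a n * x ^ n) ((1 + x) ^ a) := by
  simpa [binomialSeries, FormalMultilinearSeries.coeff_ofScalars, mul_comm] using
    one_add_rpow_hasFPowerSeriesOnBall_zero.hasSum (mem_eball_zero_one_of_norm_lt_one hx)

theorem summable_abs_choose_mul_pow {a x : ℝ} (hx : |x| < 1) :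
    Summable (fun n => |Ring.choose a n * x ^ n|) := by
  have hx' : x ∈ Metric.eball (0 : ℝ) (binomialSeries ℝ a).radius :=
    Metric.eball_subset_eball binomialSeries_radius_ge_one (mem_eball_zero_one_of_norm_lt_one hx)
  simpa [binomialSeries, FormalMultilinearSeries.coeff_ofScalars, mul_comm, abs_mul] using
    (binomialSeries ℝ a).summable_norm_apply hx'

end Real

theorem neg_one_pow_succ_mul_genBinomHalf_mul_pow_succ (q : ℝ) (m : ℕ) :
    (-1) ^ (m + 1) * genBinomHalf m * q ^ (m + 1) =
      -q * (Ring.choose (-1 / 2 : ℝ) m * (-q) ^ m) := by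
  rw [genBinomHalf_eq_choose, neg_pow]
  ring

theorem hasSum_neg_one_pow_succ_mul_genBinomHalf_mul_pow_succ {q : ℝ} (hq : |q| < 1) :
    HasSum (fun m => (-1) ^ (m + 1) * genBinomHalf m * q ^ (m + 1)) (-q / √(1 - q)) := by
  have hq' : |-q| < 1 := by rwa [abs_neg]
  have hsqrt : (1 + -q) ^ (-1 / 2 : ℝ) = (√(1 - q))⁻¹ := by
    rw [← sub_eq_add_neg, neg_div, Real.rpow_neg (by linarith [le_abs_self q]),
      ← Real.sqrt_eq_rpow]
  rw [div_eq_mul_inv, ← hsqrt]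
  simpa only [neg_one_pow_succ_mul_genBinomHalf_mul_pow_succ] using
    (Real.hasSum_choose_mul_pow hq').mul_left (-q)

theorem summable_abs_neg_one_pow_succ_mul_genBinomHalf_mul_pow_succ {q : ℝ} (hq : |q| < 1) :
    Summable (fun m => |(-1) ^ (m + 1) * genBinomHalf m * q ^ (m + 1)|) := by
  have hq' : |-q| < 1 := by rwa [abs_neg]
  simpa only [neg_one_pow_succ_mul_genBinomHalf_mul_pow_succ, abs_mul (-q)] using
    (Real.summable_abs_choose_mul_pow hq').mul_left _

theorem summable_norm_sum_mul {ι 𝕜 : Type*} [NormedRing 𝕜] (S : Finset ι) (u : ι → 𝕜)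
    {r : ι → ℕ → 𝕜} (hr : ∀ i ∈ S, Summable fun m => ‖r i m‖) :
    Summable fun m => ‖∑ i ∈ S, u i * r i m‖ :=
  .of_nonneg_of_le (fun _ => norm_nonneg _)
    (fun _ => (norm_sum_le _ _).trans (sum_le_sum fun _ _ => norm_mul_le _ _))
    (summable_sum fun i hi => (hr i hi).mul_left ‖u i‖)

section ExponentialSums

variable {ι : Type*} (S : Finset ι) (c a : ι → ℂ)

theorem hasDerivAt_sum_mul_cexp (x : ℝ) :
    HasDerivAt (fun y : ℝ => ∑ i ∈ S, c i * cexp (a i * y))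
      (∑ i ∈ S, c i * a i * cexp (a i * x)) x := by
  refine HasDerivAt.fun_sum fun i _ => ?_
  have h := (((hasDerivAt_id x).ofReal_comp.const_mul (a i)).cexp).const_mul (c i)
  simpa [mul_assoc, mul_comm (cexp _)] using h

theorem iteratedDeriv_sum_mul_cexp (k : ℕ) :
    iteratedDeriv k (fun x : ℝ => ∑ i ∈ S, c i * cexp (a i * x)) =
      fun x : ℝ => ∑ i ∈ S, c i * a i ^ k * cexp (a i * x) := by
  induction k with
  | zero => simp
  | succ k ih =>
    rw [iteratedDeriv_succ, ih]
    funext x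
    exact (hasDerivAt_sum_mul_cexp S (fun i => c i * a i ^ k) a x).deriv.trans
      (sum_congr rfl fun i _ => by ring)

end ExponentialSums

noncomputable def kineticTerm (l : ℝ) (u : ℝ → ℂ) (x : ℝ) (m : ℕ) : ℂ :=
  (-1) ^ (m + 1) * (genBinomHalf m : ℂ) * (l : ℂ) ^ (2 * m + 2) * iteratedDeriv (2 * m + 2) u x

section KineticTermOfExponentialSum

variable {ι : Type*} (S : Finset ι) (c : ι → ℂ) (k : ι → ℝ) (l x : ℝ)

theorem kineticTerm_sum_mul_cexp (m : ℕ) :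
    kineticTerm l (fun y : ℝ => ∑ i ∈ S, c i * cexp (-k i * y)) x m =
      ∑ i ∈ S, c i * cexp (-k i * x) *
        ((-1) ^ (m + 1) * genBinomHalf m * (l ^ 2 * k i ^ 2) ^ (m + 1) : ℝ) := by
  rw [kineticTerm, iteratedDeriv_sum_mul_cexp S c (fun i => -(k i : ℂ)), mul_sum]
  refine sum_congr rfl fun i _ => ?_
  rw [(show Even (2 * m + 2) from ⟨m + 1, by ring⟩).neg_pow]
  push_cast
  ring

variable {S k l}

theorem hasSum_kineticTerm_sum_mul_cexp (hk : ∀ i ∈ S, |l ^ 2 * k i ^ 2| < 1) :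
    HasSum (fun m => kineticTerm l (fun y : ℝ => ∑ i ∈ S, c i * cexp (-k i * y)) x m)
      (∑ i ∈ S, c i * cexp (-k i * x) *
        ((-(l ^ 2 * k i ^ 2) / √(1 - l ^ 2 * k i ^ 2) : ℝ) : ℂ)) := by
  simp_rw [kineticTerm_sum_mul_cexp]
  exact hasSum_sum fun i hi => (Complex.hasSum_ofReal.mpr
    (hasSum_neg_one_pow_succ_mul_genBinomHalf_mul_pow_succ (hk i hi))).mul_left _

theorem summable_norm_kineticTerm_sum_mul_cexp (hk : ∀ i ∈ S, |l ^ 2 * k i ^ 2| < 1) :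
    Summable fun m => ‖kineticTerm l (fun y : ℝ => ∑ i ∈ S, c i * cexp (-k i * y)) x m‖ := by
  simp_rw [kineticTerm_sum_mul_cexp]
  refine summable_norm_sum_mul S _ fun i hi => ?_
  simpa only [norm_real, Real.norm_eq_abs] using
    summable_abs_neg_one_pow_succ_mul_genBinomHalf_mul_pow_succ (hk i hi)

end KineticTermOfExponentialSum

-- The `n`-th mode of `Y` depends on time through `exp (modeExponent ℏ E₀ (l₀²n²) * t)`.
noncomputable def modeExponent (ℏ E₀ q : ℝ) : ℂ :=
  -I * E₀ / ℏ + I * E₀ * q / (2 * ℏ * (√(1 - q) : ℂ))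

theorem I_mul_mul_modeExponent {ℏ : ℝ} (hℏ : ℏ ≠ 0) (E₀ q : ℝ) :
    I * ℏ * modeExponent ℏ E₀ q = E₀ + E₀ / 2 * ((-q / √(1 - q) : ℝ) : ℂ) := by
  have hℏ' : (ℏ : ℂ) ≠ 0 := by exact_mod_cast hℏ
  rw [modeExponent]
  push_cast
  field_simp
  rw [I_sq]
  ring

theorem cexp_modeExponent_mul (ℏ E₀ q t : ℝ) :
    cexp (modeExponent ℏ E₀ q * t) =
      cexp (-I * E₀ * t / ℏ) * cexp (I * E₀ * q * t / (2 * ℏ * (√(1 - q) : ℂ))) := by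
  rw [← Complex.exp_add, modeExponent]
  ring_nf

theorem abs_sq_mul_natCast_sq_lt_one {l : ℝ} {N n : ℕ} (hl : 0 ≤ l) (hNl : N * l < 1)
    (hn : n ≤ N) : |l ^ 2 * (n : ℝ) ^ 2| < 1 := by
  have hnl : (n : ℝ) * l < 1 :=
    lt_of_le_of_lt (mul_le_mul_of_nonneg_right (by exact_mod_cast hn) hl) hNl
  rw [abs_of_nonneg (by positivity), ← mul_pow, mul_comm]
  exact pow_lt_one₀ (by positivity) hnl two_ne_zero

theorem stmt3_general (ℏ c m₀ : ℝ) (hℏ : 0 < ℏ) (hc : 0 < c) (hm₀ : 0 < m₀)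
    (E₀ l₀ : ℝ) (hl₀ : l₀ = ℏ / (m₀ * c))
    (N : ℕ) (hNl : (N : ℝ) * l₀ < 1)
    (f : ℕ → ℂ) (Y : ℝ → ℝ → ℂ)
    (hY : ∀ x t : ℝ, Y x t =
      Complex.exp (-Complex.I * E₀ * t / ℏ) *
        ∑ n ∈ Finset.Icc 1 N,
          f n *
            Complex.exp (Complex.I * E₀ * l₀ ^ 2 * (n : ℂ) ^ 2 * t /
              (2 * ℏ * (Real.sqrt (1 - l₀ ^ 2 * (n : ℝ) ^ 2) : ℂ))) *
            Complex.exp (-(n : ℂ) * x)) :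
    ∀ x t : ℝ,
      Summable (fun m : ℕ =>
        ‖(-1 : ℂ) ^ (m + 1) * (genBinomHalf m : ℂ) * (l₀ : ℂ) ^ (2 * m + 2) *
            iteratedDeriv (2 * m + 2) (fun x' : ℝ => Y x' t) x‖) ∧
      Complex.I * ℏ * deriv (fun t' : ℝ => Y x t') t =
        (E₀ : ℂ) * Y x t +
          ((E₀ : ℂ) / 2) *
            ∑' m : ℕ,
              (-1 : ℂ) ^ (m + 1) * (genBinomHalf m : ℂ) * (l₀ : ℂ) ^ (2 * m + 2) *
                iteratedDeriv (2 * m + 2) (fun x' : ℝ => Y x' t) x := by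
  intro x t
  set γ : ℕ → ℂ := fun n => modeExponent ℏ E₀ (l₀ ^ 2 * (n : ℝ) ^ 2)
  have hq : ∀ n ∈ Icc 1 N, |l₀ ^ 2 * (n : ℝ) ^ 2| < 1 := fun n hn =>
    abs_sq_mul_natCast_sq_lt_one (by rw [hl₀]; positivity) hNl (mem_Icc.mp hn).2
  have hmodes : ∀ x t : ℝ,
      Y x t = ∑ n ∈ Icc 1 N, f n * cexp (γ n * t) * cexp (-((n : ℝ) : ℂ) * x) := by
    intro x t
    rw [hY, mul_sum]
    refine sum_congr rfl fun n _ => ?_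
    simp only [γ, cexp_modeExponent_mul, ofReal_natCast]
    push_cast
    ring_nf
  have hYx : (fun x' : ℝ => Y x' t) =
      fun x' : ℝ => ∑ n ∈ Icc 1 N, f n * cexp (γ n * t) * cexp (-((n : ℝ) : ℂ) * x') :=
    funext fun x' => hmodes x' t
  have hYt : (fun t' : ℝ => Y x t') =
      fun t' : ℝ => ∑ n ∈ Icc 1 N, f n * cexp (-((n : ℝ) : ℂ) * x) * cexp (γ n * t') :=
    funext fun t' => by rw [hmodes]; exact sum_congr rfl fun n _ => mul_right_comm _ _ _
  refine ⟨by rw [hYx]; exact summable_norm_kineticTerm_sum_mul_cexp _ x hq, ?_⟩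
  change _ = _ + _ * ∑' m, kineticTerm l₀ (fun x' => Y x' t) x m
  rw [hYt, (hasDerivAt_sum_mul_cexp _ _ γ t).deriv, hYx,
    (hasSum_kineticTerm_sum_mul_cexp _ x hq).tsum_eq, hmodes x t, mul_sum, mul_sum, mul_sum,
    ← sum_add_distrib]
  refine sum_congr rfl fun n _ => ?_
  linear_combination (f n * cexp (γ n * t) * cexp (-((n : ℝ) : ℂ) * x)) *
    I_mul_mul_modeExponent hℏ.ne' E₀ (l₀ ^ 2 * (n : ℝ) ^ 2)

/-- **Theorem 2 of the paper.**  The explicit wave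
`Y(x,t) = exp(−iE₀t/ℏ) Σ_{n=1}^{N} fₙ exp(iE₀l₀²n²t/(2ℏ√(1−l₀²n²))) e^{−nx}`
solves the infinite-order relativistic wave equation
`iℏ ∂ₜY = E₀Y + (E₀/2) Σ_{m≥0} (−1)^{m+1} C(−1/2,m) l₀^{2m+2} ∂ₓ^{2m+2} Y`,
the series converging absolutely. -/
theorem stmt3 (ℏ c m₀ : ℝ) (hℏ : 0 < ℏ) (hc : 0 < c) (hm₀ : 0 < m₀)
    (E₀ l₀ : ℝ) (hE₀ : E₀ = m₀ * c ^ 2) (hl₀ : l₀ = ℏ / (m₀ * c))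
    (N : ℕ) (hN : 0 < N) (hNl : (N : ℝ) * l₀ < 1)
    (f : ℕ → ℂ) (Y : ℝ → ℝ → ℂ)
    (hY : ∀ x t : ℝ, Y x t =
      Complex.exp (-Complex.I * E₀ * t / ℏ) *
        ∑ n ∈ Finset.Icc 1 N,
          f n *
            Complex.exp (Complex.I * E₀ * l₀ ^ 2 * (n : ℂ) ^ 2 * t /
              (2 * ℏ * (Real.sqrt (1 - l₀ ^ 2 * (n : ℝ) ^ 2) : ℂ))) *
            Complex.exp (-(n : ℂ) * x)) :
    ∀ x t : ℝ,
      Summable (fun m : ℕ =>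
        ‖(-1 : ℂ) ^ (m + 1) * (genBinomHalf m : ℂ) * (l₀ : ℂ) ^ (2 * m + 2) *
            iteratedDeriv (2 * m + 2) (fun x' : ℝ => Y x' t) x‖) ∧
      Complex.I * ℏ * deriv (fun t' : ℝ => Y x t') t =
        (E₀ : ℂ) * Y x t +
          ((E₀ : ℂ) / 2) *
            ∑' m : ℕ,
              (-1 : ℂ) ^ (m + 1) * (genBinomHalf m : ℂ) * (l₀ : ℂ) ^ (2 * m + 2) *
                iteratedDeriv (2 * m + 2) (fun x' : ℝ => Y x' t) x :=
  stmt3_general ℏ c m₀ hℏ hc hm₀ E₀ l₀ hl₀ N hNl f Y hY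
end

section
/- Let N and M be natural numbers, b₀, …, b_N and c₀, …, c_M complex numbers. Let y : ℝ → ℂ be N-times continuously differentiable, with y^{(k)} integrable on ℝ for every 0 ≤ k ≤ N and y^{(k)}(x) → 0 as |x| → ∞ for every 0 ≤ k < N. Suppose that for all x ∈ ℝ, Σ_{k=0}^{N} b_k y^{(k)}(x) = (Σ_{n=0}^{M} c_n e^{−inx}) y(x). Define ŷ(γ) = ∫_{−∞}^{∞} y(t) e^{−itγ} dt. Then for all γ ∈ ℝ, Σ_{n=0}^{M} c_n ŷ(γ + n) = (Σ_{k=0}^{N} b_k (iγ)^k) ŷ(γ). -/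
/-!
The transform `ŷ` is Mathlib's `𝓕` (which carries `2π` in the exponent) at `γ / 2π`, so it turns
differentiation into multiplication by `iγ` and multiplication by `e^{-iat}` into the shift
`γ ↦ γ + a`. Transforming both sides of the equation term by term gives the shift equation.
-/

open MeasureTheory

section AngularFourier

open Complex

noncomputable def angularFourier (f : ℝ → ℂ) (γ : ℝ) : ℂ :=
  ∫ t : ℝ, f t * exp (-I * t * γ)

theorem angularFourier_eq_fourier (f : ℝ → ℂ) (γ : ℝ) :
    angularFourier f γ = FourierTransform.fourier f (γ / (2 * Real.pi)) := by
  rw [angularFourier, Real.fourier_real_eq_integral_exp_smul]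
  congr 1 with t
  have hphase : (-2 * Real.pi * t * (γ / (2 * Real.pi)) : ℝ) = -t * γ := by
    field_simp
  rw [smul_eq_mul, mul_comm, hphase]
  push_cast
  ring

theorem integrable_mul_exp_neg_I_mul {f : ℝ → ℂ} (hf : Integrable f) (γ : ℝ) :
    Integrable (fun t : ℝ => f t * exp (-I * t * γ)) := by
  refine hf.mul_bdd (c := 1) (Continuous.aestronglyMeasurable (by fun_prop))
    (Filter.Eventually.of_forall fun t => ?_)
  simp [norm_exp]

theorem angularFourier_finset_sum {ι : Type*} (s : Finset ι) (a : ι → ℂ) {g : ι → ℝ → ℂ}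
    (hg : ∀ i ∈ s, Integrable (g i)) (γ : ℝ) :
    angularFourier (fun t => ∑ i ∈ s, a i * g i t) γ = ∑ i ∈ s, a i * angularFourier (g i) γ := by
  simp only [angularFourier, Finset.sum_mul, mul_assoc (a _)]
  rw [integral_finsetSum _ fun i hi => (integrable_mul_exp_neg_I_mul (hg i hi) γ).const_mul (a i)]
  simp only [integral_const_mul]

theorem angularFourier_mul_exp (f : ℝ → ℂ) (a γ : ℝ) :
    angularFourier (fun t => f t * exp (-I * t * a)) γ = angularFourier f (γ + a) := by
  unfold angularFourier
  congr 1 with t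
  rw [mul_assoc, ← exp_add]
  push_cast
  ring

theorem angularFourier_deriv {f : ℝ → ℂ} (hf : Integrable f) (hf' : Differentiable ℝ f)
    (hderiv : Integrable (deriv f)) (γ : ℝ) :
    angularFourier (deriv f) γ = I * γ * angularFourier f γ := by
  have hscale : (2 * Real.pi * I * ((γ / (2 * Real.pi) : ℝ) : ℂ)) = I * γ := by
    have : (Real.pi : ℂ) ≠ 0 := ofReal_ne_zero.mpr Real.pi_ne_zero
    push_cast
    field_simp
  rw [angularFourier_eq_fourier, Real.fourier_deriv hf hf' hderiv]
  beta_reduce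
  rw [smul_eq_mul, hscale, angularFourier_eq_fourier]

theorem angularFourier_iteratedDeriv {N : ℕ} {f : ℝ → ℂ} (hf : ContDiff ℝ N f)
    (hderivs : ∀ k ≤ N, Integrable (iteratedDeriv k f)) (γ : ℝ) {k : ℕ} (hk : k ≤ N) :
    angularFourier (iteratedDeriv k f) γ = (I * γ) ^ k * angularFourier f γ := by
  induction k with
  | zero => simp
  | succ k ih =>
    have hdiff : Differentiable ℝ (iteratedDeriv k f) :=
      hf.differentiable_iteratedDeriv k (by exact_mod_cast hk)
    rw [iteratedDeriv_succ, angularFourier_deriv (hderivs k (k.le_succ.trans hk)) hdiff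
      (iteratedDeriv_succ (f := f) ▸ hderivs (k + 1) hk), ih (k.le_succ.trans hk), pow_succ]
    ring

end AngularFourier

theorem stmt4_general (N M : ℕ) (b : ℕ → ℂ) (c : ℕ → ℂ) (y : ℝ → ℂ)
    (hsmooth : ContDiff ℝ N y)
    (hint : ∀ k : ℕ, k ≤ N → Integrable (iteratedDeriv k y))
    (hode : ∀ x : ℝ,
      ∑ k ∈ Finset.range (N + 1), b k * iteratedDeriv k y x =
        (∑ n ∈ Finset.range (M + 1), c n * Complex.exp (-Complex.I * n * x)) * y x)
    (yhat : ℝ → ℂ)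
    (hyhat : ∀ γ : ℝ, yhat γ = ∫ t : ℝ, y t * Complex.exp (-Complex.I * t * γ)) :
    ∀ γ : ℝ,
      ∑ n ∈ Finset.range (M + 1), c n * yhat (γ + n) =
        (∑ k ∈ Finset.range (N + 1), b k * (Complex.I * γ) ^ k) * yhat γ := by
  intro γ
  obtain rfl : yhat = angularFourier y := funext hyhat
  have hy : Integrable y := by simpa using hint 0 N.zero_le
  calc ∑ n ∈ Finset.range (M + 1), c n * angularFourier y (γ + n)
      = angularFourier (fun t => ∑ n ∈ Finset.range (M + 1),
          c n * (y t * Complex.exp (-Complex.I * t * (n : ℝ)))) γ := by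
        rw [angularFourier_finset_sum _ _ fun (n : ℕ) _ => integrable_mul_exp_neg_I_mul hy n]
        simp only [angularFourier_mul_exp]
    _ = angularFourier (fun t => ∑ k ∈ Finset.range (N + 1), b k * iteratedDeriv k y t) γ := by
        congr 1 with t
        rw [hode, Finset.sum_mul]
        refine Finset.sum_congr rfl fun n _ => ?_
        push_cast
        ring
    _ = (∑ k ∈ Finset.range (N + 1), b k * (Complex.I * γ) ^ k) * angularFourier y γ := by
        rw [angularFourier_finset_sum _ _ fun k hk => hint k (Finset.mem_range_succ_iff.mp hk),
          Finset.sum_mul]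
        refine Finset.sum_congr rfl fun k hk => ?_
        rw [angularFourier_iteratedDeriv hsmooth hint γ (Finset.mem_range_succ_iff.mp hk)]
        ring

/-- **Theorem 4.2 / Theorem 10 correspondence of the paper.**  If
`Σ_{k=0}^{N} b_k y^{(k)}(x) = (Σ_{n=0}^{M} c_n e^{−inx}) y(x)` for a sufficiently
nice `y`, then its Fourier transform `ŷ(γ) = ∫ y(t) e^{−itγ} dt` satisfies the
shift equation `Σ_{n=0}^{M} c_n ŷ(γ + n) = (Σ_{k=0}^{N} b_k (iγ)^k) ŷ(γ)`. -/
theorem stmt4 (N M : ℕ) (b : ℕ → ℂ) (c : ℕ → ℂ) (y : ℝ → ℂ)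
    (hsmooth : ContDiff ℝ N y)
    (hint : ∀ k : ℕ, k ≤ N → Integrable (iteratedDeriv k y))
    (hdecay : ∀ k : ℕ, k < N →
      Filter.Tendsto (iteratedDeriv k y) (Filter.cocompact ℝ) (nhds 0))
    (hode : ∀ x : ℝ,
      ∑ k ∈ Finset.range (N + 1), b k * iteratedDeriv k y x =
        (∑ n ∈ Finset.range (M + 1), c n * Complex.exp (-Complex.I * n * x)) * y x)
    (yhat : ℝ → ℂ)
    (hyhat : ∀ γ : ℝ, yhat γ = ∫ t : ℝ, y t * Complex.exp (-Complex.I * t * γ)) :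
    ∀ γ : ℝ,
      ∑ n ∈ Finset.range (M + 1), c n * yhat (γ + n) =
        (∑ k ∈ Finset.range (N + 1), b k * (Complex.I * γ) ^ k) * yhat γ :=
  stmt4_general N M b c y hsmooth hint hode yhat hyhat
end

section
/- Let (A_n)_{n∈ℤ} be a family of functions A_n : ℂ → ℂ satisfying A_{n−1}(z+1) = A_n(z) for all n ∈ ℤ and all z ∈ ℂ. Fix z ∈ ℂ and w ∈ ℂ with w ≠ 0, and suppose the families (A_n(z) w^{−n})_{n∈ℤ} and (A_n(z+1) w^{−n})_{n∈ℤ} are summable. Then f(z+1, w) = w · f(z, w), where f(z, w) = Σ_{n∈ℤ} A_n(z) w^{−n}. -/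
/-- **Theorem 9.0d (i) of the paper.**  If `A_{n−1}(z+1) = A_n(z)` and
`f(z,w) = Σ_{n∈ℤ} A_n(z) w^{−n}`, then `f(z+1, w) = w · f(z, w)`. -/
theorem stmt10 (A : ℤ → ℂ → ℂ)
    (hA : ∀ (n : ℤ) (z : ℂ), A (n - 1) (z + 1) = A n z)
    (z w : ℂ) (hw : w ≠ 0)
    (h1 : Summable fun n : ℤ => A n z * w ^ (-n))
    (h2 : Summable fun n : ℤ => A n (z + 1) * w ^ (-n)) :
    (∑' n : ℤ, A n (z + 1) * w ^ (-n)) = w * ∑' n : ℤ, A n z * w ^ (-n) := by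
  rw [← tsum_mul_left, ← (Equiv.subRight (1 : ℤ)).tsum_eq
      (fun n : ℤ => A n (z + 1) * w ^ (-n))]
  congr 1
  ext n
  simp only [Equiv.subRight_apply, hA]
  rw [neg_sub, sub_eq_add_neg, zpow_add₀ hw, zpow_one]
  ring
end

section
/- Let ξ ∈ ℂ with ξ ≠ 0, and let λ, H : ℂ → ℂ be nowhere-vanishing functions with λ(z+1) = ξ λ(z) and H(z+1) = λ(z) H(z) for all z ∈ ℂ. Let (A_n)_{n∈ℤ} be a family of functions A_n : ℂ → ℂ with A_{n−1}(z+1) = A_n(z) for all n ∈ ℤ and z ∈ ℂ. Suppose that for every z ∈ ℂ the family ( A_n(z) ξ^{−n(n−1)(n−2)/6} λ(z)^{−n(n−1)/2} H(z)^{−n} )_{n∈ℤ} is summable, and define ŷ(z) as its sum. Then ŷ(z+1) = H(z) ŷ(z) for all z ∈ ℂ. -/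
lemma dvd6 (n : ℤ) : (6:ℤ) ∣ n * (n - 1) * (n - 2) := by
  have h : ∀ a : ZMod 6, a * (a - 1) * (a - 2) = 0 := by decide
  have := (ZMod.intCast_zmod_eq_zero_iff_dvd (n * (n - 1) * (n - 2)) 6).mp
  apply this
  push_cast
  exact h n

lemma dvd2 (n : ℤ) : (2:ℤ) ∣ n * (n - 1) := by
  have h : ∀ a : ZMod 2, a * (a - 1) = 0 := by decide
  apply (ZMod.intCast_zmod_eq_zero_iff_dvd (n * (n - 1)) 2).mp
  push_cast
  exact h n

lemma e1 (n : ℤ) : (n-1) * (n-1-1) * (n-1-2) / 6 + (n-1) * (n-1-1) / 2 = n * (n-1) * (n-2) / 6 := by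
  obtain ⟨a, ha⟩ := dvd6 (n-1)
  obtain ⟨b, hb⟩ := dvd2 (n-1)
  obtain ⟨c, hc⟩ := dvd6 n
  have h1 : (n-1) * (n-1-1) * (n-1-2) = 6 * a := by linear_combination ha
  have h2 : (n-1) * (n-1-1) = 2 * b := by linear_combination hb
  rw [h1, h2, hc, Int.mul_ediv_cancel_left _ (by norm_num), Int.mul_ediv_cancel_left _ (by norm_num), Int.mul_ediv_cancel_left _ (by norm_num)]
  nlinarith [ha, hb, hc]

lemma e2 (n : ℤ) : (n-1) * (n-1-1) / 2 + (n-1) = n * (n-1) / 2 := by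
  obtain ⟨b, hb⟩ := dvd2 (n-1)
  obtain ⟨d, hd⟩ := dvd2 n
  have h2 : (n-1) * (n-1-1) = 2 * b := by linear_combination hb
  rw [h2, hd, Int.mul_ediv_cancel_left _ (by norm_num), Int.mul_ediv_cancel_left _ (by norm_num)]
  nlinarith [hb, hd]

/-- **Theorem 9.0d (ii) of the paper.**  With `λ(z+1) = ξ λ(z)`, `H(z+1) = λ(z) H(z)`,
`A_{n−1}(z+1) = A_n(z)` and
`ŷ(z) = Σ_{n∈ℤ} A_n(z) ξ^{−n(n−1)(n−2)/6} λ(z)^{−n(n−1)/2} H(z)^{−n}`,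
one has `ŷ(z+1) = H(z) ŷ(z)`. -/
theorem stmt11 (ξ : ℂ) (hξ : ξ ≠ 0) (lam H : ℂ → ℂ)
    (hlam0 : ∀ z : ℂ, lam z ≠ 0) (hH0 : ∀ z : ℂ, H z ≠ 0)
    (hlam : ∀ z : ℂ, lam (z + 1) = ξ * lam z)
    (hH : ∀ z : ℂ, H (z + 1) = lam z * H z)
    (A : ℤ → ℂ → ℂ)
    (hA : ∀ (n : ℤ) (z : ℂ), A (n - 1) (z + 1) = A n z)
    (hsum : ∀ z : ℂ, Summable fun n : ℤ =>
      A n z * ξ ^ (-(n * (n - 1) * (n - 2) / 6)) * lam z ^ (-(n * (n - 1) / 2)) * H z ^ (-n))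
    (yhat : ℂ → ℂ)
    (hyhat : ∀ z : ℂ, yhat z = ∑' n : ℤ,
      A n z * ξ ^ (-(n * (n - 1) * (n - 2) / 6)) * lam z ^ (-(n * (n - 1) / 2)) * H z ^ (-n)) :
    ∀ z : ℂ, yhat (z + 1) = H z * yhat z := by
  intro z
  rw [hyhat (z+1), hyhat z, ← tsum_mul_left,
    ← (Equiv.subRight (1:ℤ)).tsum_eq]
  refine tsum_congr fun n => ?_
  simp only [Equiv.subRight_apply, hA, hlam, hH]
  rw [← e1 n, ← e2 n]
  have hnH : -(n - 1) = 1 + -n := by ring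
  rw [neg_add (((n-1) * (n-1-1) * (n-1-2)) / 6) _, neg_add ((n-1) * (n-1-1) / 2) _,
    zpow_add₀ hξ, zpow_add₀ (hlam0 z), hnH, mul_zpow, mul_zpow,
    zpow_add₀ (hH0 z) 1 (-n), zpow_one]
  ring
end

section
/- Let ξ ∈ ℂ with ξ ≠ 0 and let λ : ℂ → ℂ be nowhere vanishing with λ(z+1) = ξ λ(z) for all z ∈ ℂ. Suppose that for every z ∈ ℂ the family ( ξ^{−n(n+1)/2} λ(z)^n )_{n∈ℤ} is summable, and define Θ(z) = Σ_{n∈ℤ} ξ^{−n(n+1)/2} λ(z)^n. Then Θ(z+1) = λ(z) Θ(z) for all z ∈ ℂ. -/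
/-- **Theta functional equation of Section 4 of the paper.**  If `λ(z+1) = ξ λ(z)` and
`Θ(z) = Σ_{n∈ℤ} ξ^{−n(n+1)/2} λ(z)ⁿ`, then `Θ(z+1) = λ(z) Θ(z)`. -/
theorem stmt12 (ξ : ℂ) (hξ : ξ ≠ 0) (lam : ℂ → ℂ)
    (hlam0 : ∀ z : ℂ, lam z ≠ 0)
    (hlam : ∀ z : ℂ, lam (z + 1) = ξ * lam z)
    (hsum : ∀ z : ℂ, Summable fun n : ℤ => ξ ^ (-(n * (n + 1) / 2)) * lam z ^ n)
    (Θ : ℂ → ℂ)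
    (hΘ : ∀ z : ℂ, Θ z = ∑' n : ℤ, ξ ^ (-(n * (n + 1) / 2)) * lam z ^ n) :
    ∀ z : ℂ, Θ (z + 1) = lam z * Θ z := by
  intro z
  rw [hΘ, hΘ, ← tsum_mul_left]
  rw [← (Equiv.addRight (1 : ℤ)).tsum_eq
      (fun n : ℤ => ξ ^ (-(n * (n + 1) / 2)) * lam (z + 1) ^ n)]
  congr 1
  funext n
  simp only [Equiv.coe_addRight, hlam z]
  have e1 := Int.even_mul_succ_self n
  have e2 := Int.even_mul_succ_self (n + 1)
  obtain ⟨a, ha⟩ := e1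
  obtain ⟨b, hb⟩ := e2
  have hx : (n + 1) * (n + 1 + 1) = n * (n + 1) + 2 * (n + 1) := by ring
  have key : -((n + 1) * (n + 1 + 1) / 2) = -(n * (n + 1) / 2) + -(n + 1) := by omega
  have h2 : ξ ^ (-(n + 1) : ℤ) * ξ ^ ((n + 1) : ℤ) = 1 := by
    rw [← zpow_add₀ hξ, neg_add_cancel, zpow_zero]
  rw [mul_zpow, key, zpow_add₀ hξ, zpow_add_one₀ (hlam0 z)]
  linear_combination (ξ ^ (-(n * (n + 1) / 2)) * lam z ^ n * lam z) * h2
end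

section
/- Let (c_k)_{k∈ℤ} be complex numbers, (A_n)_{n∈ℤ} a family of functions A_n : ℂ → ℂ, and θ, g : ℂ → ℂ. Fix z ∈ ℂ and assume: (eq1) for every w ∈ {z + k : k ∈ ℤ}, θ(w) = Σ_{n∈ℤ} A_n(w) θ(w+n) with the family summable; (eq2) for every n ∈ ℤ, Σ_{k∈ℤ} c_k A_{n−k}(z+k) = δ_{n,0} g(z) with the family summable; and the double family ( c_k A_n(z+k) θ(z+n+k) )_{(k,n)∈ℤ×ℤ} is summable. Then Σ_{k∈ℤ} c_k θ(z+k) = g(z) θ(z). -/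
/-- **Theorem 8.1 / pre-Theorem-5 computation of the paper.**  If
(eq1) `θ(w) = Σ_{n∈ℤ} A_n(w) θ(w+n)` for every `w = z+k`, `k ∈ ℤ`, and
(eq2) `Σ_{k∈ℤ} c_k A_{n−k}(z+k) = δ_{n,0} g(z)` for every `n ∈ ℤ`, with all the
indicated (double) families summable, then `Σ_{k∈ℤ} c_k θ(z+k) = g(z) θ(z)`. -/
theorem stmt19 (c : ℤ → ℂ) (A : ℤ → ℂ → ℂ) (θ g : ℂ → ℂ) (z : ℂ)
    (heq1_sum : ∀ k : ℤ, Summable fun n : ℤ => A n (z + k) * θ (z + k + n))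
    (heq1 : ∀ k : ℤ, θ (z + k) = ∑' n : ℤ, A n (z + k) * θ (z + k + n))
    (heq2_sum : ∀ n : ℤ, Summable fun k : ℤ => c k * A (n - k) (z + k))
    (heq2 : ∀ n : ℤ, (∑' k : ℤ, c k * A (n - k) (z + k)) =
      if n = 0 then g z else 0)
    (hdouble : Summable fun p : ℤ × ℤ => c p.1 * A p.2 (z + p.1) * θ (z + p.2 + p.1)) :
    (∑' k : ℤ, c k * θ (z + k)) = g z * θ z := by
  set f : ℤ × ℤ → ℂ := fun p => c p.1 * A p.2 (z + p.1) * θ (z + p.2 + p.1) with hf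
  -- reindexing equivalence: (m, k) ↦ (k, m - k)
  let e : ℤ × ℤ ≃ ℤ × ℤ :=
    { toFun := fun p => (p.2, p.1 - p.2)
      invFun := fun q => (q.1 + q.2, q.1)
      left_inv := fun p => by simp
      right_inv := fun q => by simp }
  have hse : Summable (f ∘ e) := (e.summable_iff).mpr hdouble
  have h1 : (∑' k : ℤ, c k * θ (z + k)) = ∑' k : ℤ, ∑' n : ℤ, f (k, n) := by
    apply tsum_congr; intro k
    rw [heq1 k, ← tsum_mul_left]
    apply tsum_congr; intro n
    simp only [hf]; ring_nf
  have hrow1 : ∀ k : ℤ, Summable fun n : ℤ => f (k, n) := by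
    intro k
    apply ((heq1_sum k).mul_left (c k)).congr
    intro n
    simp only [hf]
    have : z + (k : ℂ) + (n : ℂ) = z + n + k := by ring
    rw [this]; ring
  have h2 : (∑' k : ℤ, ∑' n : ℤ, f (k, n)) = ∑' p : ℤ × ℤ, f p :=
    (Summable.tsum_prod' hdouble hrow1).symm
  have h3 : (∑' p : ℤ × ℤ, f p) = ∑' p : ℤ × ℤ, f (e p) := (e.tsum_eq f).symm
  have h4 : (∑' p : ℤ × ℤ, f (e p)) = ∑' m : ℤ, ∑' k : ℤ, f (e (m, k)) := by
    apply Summable.tsum_prod' hse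
    intro m
    apply ((heq2_sum m).mul_right (θ (z + m))).congr
    intro k
    simp only [hf, e, Equiv.coe_fn_mk, Function.comp]
    have : z + (↑(m - k) : ℂ) + (k : ℂ) = z + m := by push_cast; ring
    rw [this]
  have h5 : ∀ m : ℤ, (∑' k : ℤ, f (e (m, k))) = (if m = 0 then g z else 0) * θ (z + m) := by
    intro m
    have : ∀ k : ℤ, f (e (m, k)) = (c k * A (m - k) (z + k)) * θ (z + m) := by
      intro k
      simp only [hf, e, Equiv.coe_fn_mk]
      have : z + (↑(m - k) : ℂ) + (k : ℂ) = z + m := by push_cast; ring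
      rw [this]
    rw [tsum_congr this, tsum_mul_right, heq2 m]
  have h6 : (∑' m : ℤ, (if m = 0 then g z else 0) * θ (z + m)) = g z * θ z := by
    rw [tsum_eq_single 0 (by intro b hb; simp [hb])]
    norm_num
  rw [h1, h2, h3, h4, tsum_congr h5, h6]
end
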